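/- arXiv:1405.6043 — 8 statements merged into one kernel-verified Lean document; each statement's English description precedes it below -/
import Mathlib

section
/- Let I be a finite set of weighted constraints on domain D, J₁, J₂ ⊆ I disjoint subinstances with variable sets V₁ = var(J₁), V₂ = var(J₂), and let a ∈ D^W with W ⊆ var(I). If V₁ ∩ V₂ ⊆ W, then w(J₁ ∪ J₂, a) = w(J₁,a) · w(J₂,a). -/
open Finset
open scoped Classical

/-- A weighted constraint with default value, viewed through the total
non-negative rational valued function it induces: `val` depends only on
the variables `vars`. -/
structure Cst (V D : Type*) where
  vars : Finset V
  val : (V → D) → NNRat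
  dep : ∀ a b : V → D, (∀ x ∈ vars, a x = b x) → val a = val b

variable {V D : Type*} [Fintype V] [DecidableEq V] [Fintype D] [DecidableEq D]

/-- var(J), the set of variables of a set of constraints. -/
def varsSet (J : Finset (Cst V D)) : Finset V := J.sup Cst.vars

/-- Extend the partial assignment `a` by the values of `b` on `S`. -/
noncomputable def patch (a : V → D) (S : Finset V) (b : {x // x ∈ S} → D) : V → D :=
  fun v => if h : v ∈ S then b ⟨v, h⟩ else a v

/-- w(J,a) for a partial assignment `a` on `W`: the sum over all extensions `b`
of `a` to the variables of `J` of the product of the constraint values. -/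
noncomputable def w (J : Finset (Cst V D)) (W : Finset V) (a : V → D) : NNRat :=
  ∑ b : ({x // x ∈ varsSet J \ W} → D),
    ∏ c ∈ J, c.val (patch a (varsSet J \ W) b)

/-- multiplicativity of `w` on disjoint subinstances whose common
variables are all assigned by `a`. -/
theorem stmt1 (I J₁ J₂ : Finset (Cst V D)) (W : Finset V) (a : V → D)
    (h1 : J₁ ⊆ I) (h2 : J₂ ⊆ I) (hdisj : Disjoint J₁ J₂)
    (hW : W ⊆ varsSet I) (hvars : varsSet J₁ ∩ varsSet J₂ ⊆ W) :
    w (J₁ ∪ J₂) W a = w J₁ W a * w J₂ W a := by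
  classical
  have hSu : varsSet (J₁ ∪ J₂) \ W = (varsSet J₁ \ W) ∪ (varsSet J₂ \ W) := by
    have h : varsSet (J₁ ∪ J₂) = varsSet J₁ ∪ varsSet J₂ := Finset.sup_union
    rw [h, Finset.union_sdiff_distrib]
  set S₁ := varsSet J₁ \ W with hS₁
  set S₂ := varsSet J₂ \ W with hS₂
  set S := varsSet (J₁ ∪ J₂) \ W with hSdef
  have hd : Disjoint S₁ S₂ := by
    rw [Finset.disjoint_left]
    intro x hx1 hx2
    exact (Finset.mem_sdiff.mp hx1).2
      (hvars (Finset.mem_inter.mpr ⟨(Finset.mem_sdiff.mp hx1).1, (Finset.mem_sdiff.mp hx2).1⟩))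
  have mem1 : ∀ x ∈ S₁, x ∈ S := fun x hx => hSu ▸ Finset.mem_union_left _ hx
  have mem2 : ∀ x ∈ S₂, x ∈ S := fun x hx => hSu ▸ Finset.mem_union_right _ hx
  let φ : (({x // x ∈ S₁} → D) × ({x // x ∈ S₂} → D)) → ({x // x ∈ S} → D) :=
    fun p x => if h : (x : V) ∈ S₁ then p.1 ⟨x, h⟩ else p.2 ⟨x, by
      have hx : (x : V) ∈ S₁ ∪ S₂ := by rw [← hSu]; exact x.2
      exact (Finset.mem_union.mp hx).resolve_left h⟩
  have hbij : Function.Bijective φ := by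
    constructor
    · rintro ⟨p1, p2⟩ ⟨q1, q2⟩ h
      have h1' : p1 = q1 := by
        funext x
        have := congrFun h ⟨x, mem1 x x.2⟩
        simpa [φ, x.2] using this
      have h2' : p2 = q2 := by
        funext x
        have hx1 : (x : V) ∉ S₁ := Finset.disjoint_right.mp hd x.2
        have := congrFun h ⟨x, mem2 x x.2⟩
        simpa [φ, hx1] using this
      simp [h1', h2']
    · intro b
      refine ⟨⟨fun x => b ⟨x, mem1 x x.2⟩, fun x => b ⟨x, mem2 x x.2⟩⟩, ?_⟩
      funext x
      by_cases h : (x : V) ∈ S₁ <;> simp [φ, h]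
  have key1 : ∀ p, ∏ c ∈ J₁, c.val (patch a S (φ p)) = ∏ c ∈ J₁, c.val (patch a S₁ p.1) := by
    intro p
    refine Finset.prod_congr rfl fun c hc => ?_
    refine c.dep _ _ fun x hx => ?_
    by_cases h : x ∈ S₁
    · have hxS : x ∈ S := mem1 x h
      simp [patch, hxS, h, φ]
    · have hxV : x ∈ varsSet J₁ := Finset.mem_sup.mpr ⟨c, hc, hx⟩
      have hxW : x ∈ W := by
        by_contra hw
        exact h (Finset.mem_sdiff.mpr ⟨hxV, hw⟩)
      have hxS : x ∉ S := by
        intro hmem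
        rw [hSu] at hmem
        rcases Finset.mem_union.mp hmem with h' | h'
        · exact h h'
        · exact (Finset.mem_sdiff.mp h').2 hxW
      simp [patch, hxS, h]
  have key2 : ∀ p, ∏ c ∈ J₂, c.val (patch a S (φ p)) = ∏ c ∈ J₂, c.val (patch a S₂ p.2) := by
    intro p
    refine Finset.prod_congr rfl fun c hc => ?_
    refine c.dep _ _ fun x hx => ?_
    by_cases h : x ∈ S₂
    · have hxS : x ∈ S := mem2 x h
      have hx1 : x ∉ S₁ := Finset.disjoint_right.mp hd h
      simp [patch, hxS, h, φ, hx1]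
    · have hxV : x ∈ varsSet J₂ := Finset.mem_sup.mpr ⟨c, hc, hx⟩
      have hxW : x ∈ W := by
        by_contra hw
        exact h (Finset.mem_sdiff.mpr ⟨hxV, hw⟩)
      have hxS : x ∉ S := by
        intro hmem
        rw [hSu] at hmem
        rcases Finset.mem_union.mp hmem with h' | h'
        · exact (Finset.mem_sdiff.mp h').2 hxW
        · exact h h'
      simp [patch, hxS, h]
  have step : w (J₁ ∪ J₂) W a
      = ∑ p : (({x // x ∈ S₁} → D) × ({x // x ∈ S₂} → D)),
          (∏ c ∈ J₁, c.val (patch a S₁ p.1)) * (∏ c ∈ J₂, c.val (patch a S₂ p.2)) := by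
    rw [w]
    rw [← Fintype.sum_bijective φ hbij _ _ (fun p => rfl)]
    refine Fintype.sum_congr _ _ fun p => ?_
    rw [Finset.prod_union hdisj, key1 p, key2 p]
  rw [step, w, w, Fintype.sum_prod_type]
  rw [Finset.sum_mul_sum]
end

section
/- Let I be a finite set of weighted constraints on domain D, J₁, J₂ ⊆ I, and a ∈ D^W. Set V₁ = var(J₁ \ J₂), V₂ = var(J₂ \ J₁), V₀ = var(J₁ ∩ J₂). Suppose V₀ ∩ V₁ ⊆ W and V₀ ∩ V₂ ⊆ W. If w(J₂,a) ≠ 0, then w(J₂ \ J₁, a) ≠ 0 and w(J₁,a)/w(J₂,a) = w(J₁ \ J₂, a)/w(J₂ \ J₁, a). -/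
open Finset
open scoped Classical

variable {V D : Type*} [Fintype V] [DecidableEq V] [Fintype D] [DecidableEq D]

lemma vars_subset {J : Finset (Cst V D)} {c : Cst V D} (hc : c ∈ J) :
    c.vars ⊆ varsSet J := by
  have := Finset.le_sup (f := Cst.vars) hc
  simpa [varsSet] using this

lemma w_union (A B : Finset (Cst V D)) (W : Finset V) (a : V → D)
    (hd : Disjoint A B) (hv : varsSet A ∩ varsSet B ⊆ W) :
    w (A ∪ B) W a = w A W a * w B W a := by
  classical
  set S₁ := varsSet A \ W with hS₁
  set S₂ := varsSet B \ W with hS₂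
  have hS : varsSet (A ∪ B) \ W = S₁ ∪ S₂ := by
    rw [hS₁, hS₂, ← Finset.union_sdiff_distrib]
    congr 1
    simp [varsSet, Finset.sup_union]
  have hdS : Disjoint S₁ S₂ := by
    rw [Finset.disjoint_left]
    intro x hx₁ hx₂
    have : x ∈ W := hv (Finset.mem_inter.2 ⟨(Finset.mem_sdiff.1 hx₁).1,
      (Finset.mem_sdiff.1 hx₂).1⟩)
    exact (Finset.mem_sdiff.1 hx₁).2 this
  -- the equivalence between functions on S₁ ∪ S₂ and pairs
  let e : ({x // x ∈ S₁ ∪ S₂} → D) ≃ ({x // x ∈ S₁} → D) × ({x // x ∈ S₂} → D) :=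
    { toFun := fun b => (fun x => b ⟨x, Finset.mem_union_left _ x.2⟩,
        fun x => b ⟨x, Finset.mem_union_right _ x.2⟩)
      invFun := fun p x =>
        if h : (x : V) ∈ S₁ then p.1 ⟨x, h⟩ else
          p.2 ⟨x, (Finset.mem_union.1 x.2).resolve_left h⟩
      left_inv := by
        intro b; funext x
        by_cases h : (x : V) ∈ S₁ <;> simp [h]
      right_inv := by
        intro p
        refine Prod.ext ?_ ?_
        · funext x; simp [x.2]
        · funext x
          have hx1 : (x : V) ∉ S₁ := Finset.disjoint_right.1 hdS x.2
          simp [hx1] }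
  have key : ∀ (p : ({x // x ∈ S₁} → D) × ({x // x ∈ S₂} → D)),
      (∏ c ∈ A ∪ B, c.val (patch a (S₁ ∪ S₂) (e.symm p))) =
      (∏ c ∈ A, c.val (patch a S₁ p.1)) * (∏ c ∈ B, c.val (patch a S₂ p.2)) := by
    intro p
    rw [Finset.prod_union hd]
    congr 1
    · apply Finset.prod_congr rfl
      intro c hc
      apply c.dep
      intro x hx
      have hxA : x ∈ varsSet A := vars_subset hc hx
      by_cases h : x ∈ S₁
      · have hxu : x ∈ S₁ ∪ S₂ := Finset.mem_union_left _ h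
        simp only [patch, dif_pos h, dif_pos hxu]
        show (e.symm p) ⟨x, hxu⟩ = p.1 ⟨x, h⟩
        simp [e, h]
      · have hxW : x ∈ W := by
          by_contra hxW
          exact h (Finset.mem_sdiff.2 ⟨hxA, hxW⟩)
        have hx2 : x ∉ S₂ := fun hx2 => (Finset.mem_sdiff.1 hx2).2 hxW
        have hxu : x ∉ S₁ ∪ S₂ := by simp [h, hx2]
        simp [patch, h, hxu]
    · apply Finset.prod_congr rfl
      intro c hc
      apply c.dep
      intro x hx
      have hxB : x ∈ varsSet B := vars_subset hc hx
      by_cases h : x ∈ S₂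
      · have hx1 : x ∉ S₁ := Finset.disjoint_right.1 hdS h
        have hxu : x ∈ S₁ ∪ S₂ := Finset.mem_union_right _ h
        simp only [patch, dif_pos h, dif_pos hxu]
        show (e.symm p) ⟨x, hxu⟩ = p.2 ⟨x, h⟩
        simp [e, hx1]
      · have hxW : x ∈ W := by
          by_contra hxW
          exact h (Finset.mem_sdiff.2 ⟨hxB, hxW⟩)
        have hx1 : x ∉ S₁ := fun hx1 => (Finset.mem_sdiff.1 hx1).2 hxW
        have hxu : x ∉ S₁ ∪ S₂ := by simp [h, hx1]
        simp [patch, h, hxu]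
  unfold w
  rw [hS]
  rw [← Equiv.sum_comp e.symm (fun b => ∏ c ∈ A ∪ B, c.val (patch a (S₁ ∪ S₂) b))]
  rw [Fintype.sum_prod_type]
  simp only [key]
  rw [← Finset.sum_mul_sum]

set_option maxHeartbeats 2000000 in
/-- cancellation of the common part in a quotient of weights. -/
theorem stmt2 (I J₁ J₂ : Finset (Cst V D)) (W : Finset V) (a : V → D)
    (h1 : J₁ ⊆ I) (h2 : J₂ ⊆ I) (hW : W ⊆ varsSet I)
    (h01 : varsSet (J₁ ∩ J₂) ∩ varsSet (J₁ \ J₂) ⊆ W)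
    (h02 : varsSet (J₁ ∩ J₂) ∩ varsSet (J₂ \ J₁) ⊆ W)
    (hne : w J₂ W a ≠ 0) :
    w (J₂ \ J₁) W a ≠ 0 ∧
      w J₁ W a / w J₂ W a = w (J₁ \ J₂) W a / w (J₂ \ J₁) W a := by
  classical
  have hd1 : Disjoint (J₁ ∩ J₂) (J₁ \ J₂) := by
    rw [Finset.disjoint_left]
    intro c hc hcd
    exact (Finset.mem_sdiff.1 hcd).2 (Finset.mem_inter.1 hc).2
  have hd2 : Disjoint (J₁ ∩ J₂) (J₂ \ J₁) := by
    rw [Finset.disjoint_left]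
    intro c hc hcd
    exact (Finset.mem_sdiff.1 hcd).2 (Finset.mem_inter.1 hc).1
  have hu1 : (J₁ ∩ J₂) ∪ (J₁ \ J₂) = J₁ := by
    ext c; by_cases h : c ∈ J₂ <;> simp [h]
  have hu2 : (J₁ ∩ J₂) ∪ (J₂ \ J₁) = J₂ := by
    ext c; by_cases h : c ∈ J₁ <;> simp [h]
  have e1 : w J₁ W a = w (J₁ ∩ J₂) W a * w (J₁ \ J₂) W a := by
    conv_lhs => rw [← hu1]
    exact w_union _ _ _ _ hd1 h01
  have e2 : w J₂ W a = w (J₁ ∩ J₂) W a * w (J₂ \ J₁) W a := by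
    conv_lhs => rw [← hu2]
    exact w_union _ _ _ _ hd2 h02
  rw [e2] at hne
  have h0 : w (J₁ ∩ J₂) W a ≠ 0 := left_ne_zero_of_mul hne
  have hr : w (J₂ \ J₁) W a ≠ 0 := right_ne_zero_of_mul hne
  refine ⟨hr, ?_⟩
  rw [e1, e2, mul_div_mul_left _ _ h0]
end

section
/- Let I be a finite set of weighted constraints such that distinct constraints have distinct variable sets, and let x₁,…,xₙ be an enumeration of var(I) with Xₖ := {x₁,…,xₖ}. Define c ⪯ d iff c = d or there exists k with var(c) \ Xₖ ⊊ var(d) \ Xₖ. Then ⪯ is a total order on I. -/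
open Finset
open scoped Classical

variable {n : ℕ} {γ : Type*}

/-- `Xset n k` is the set `Xₖ = {x₁,…,xₖ}` of the first `k` variables, where the
variables are `Fin n` in their natural enumeration (`x_{k+1}` is the index `k`). -/
def Xset (n k : ℕ) : Finset (Fin n) := Finset.univ.filter (fun v => (v : ℕ) < k)

/-- The order `≺`: `c ≺ d` iff for some `k`, `var(c) \ Xₖ ⊊ var(d) \ Xₖ`. -/
def prec (vr : γ → Finset (Fin n)) (c d : γ) : Prop :=
  ∃ k : ℕ, vr c \ Xset n k ⊂ vr d \ Xset n k

/-- The relations `≺ₖ`, defined inductively on `k`: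
`≺₀ = ∅` and `c ≺_{k+1} d` iff `c ≺ₖ d` or there is `e ∈ I` with `c ⪯ₖ e ≺ d`
and `x_{k+1} ∈ var(d) ∩ var(e)`. -/
def preck (I : Finset γ) (vr : γ → Finset (Fin n)) : ℕ → γ → γ → Prop
  | 0 => fun _ _ => False
  | (k+1) => fun c d => preck I vr k c d ∨
      ∃ e ∈ I, (c = e ∨ preck I vr k c e) ∧ prec vr e d ∧
        ∃ h : k < n, (⟨k, h⟩ : Fin n) ∈ vr d ∧ (⟨k, h⟩ : Fin n) ∈ vr e

/-- `x_{k+1}` is a nest point of the hypergraph of `I` after removing `x₁,…,xₖ`: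
the edges (variable sets) containing it, with `Xₖ` removed, form a chain. -/
def NestAt (I : Finset γ) (vr : γ → Finset (Fin n)) (k : ℕ) : Prop :=
  ∀ h : k < n, ∀ c ∈ I, ∀ d ∈ I,
    (⟨k, h⟩ : Fin n) ∈ vr c → (⟨k, h⟩ : Fin n) ∈ vr d →
      vr c \ Xset n k ⊆ vr d \ Xset n k ∨ vr d \ Xset n k ⊆ vr c \ Xset n k

/-- `x₁,…,xₙ` is a β-elimination order of the hypergraph of `I`. -/
def ElimOrder (I : Finset γ) (vr : γ → Finset (Fin n)) : Prop :=
  ∀ k : ℕ, NestAt I vr k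

lemma mem_Xset {k : ℕ} {v : Fin n} : v ∈ Xset n k ↔ (v : ℕ) < k := by
  simp [Xset]

lemma key {A B : Finset (Fin n)} (h : A ≠ B) :
    ∃ m : Fin n, (∀ j, m < j → (j ∈ A ↔ j ∈ B)) ∧
      ((m ∉ A ∧ m ∈ B) ∨ (m ∈ A ∧ m ∉ B)) := by
  have hS : ((A \ B) ∪ (B \ A)).Nonempty := by
    rw [Finset.nonempty_iff_ne_empty]
    intro he
    apply h
    ext v
    constructor <;> intro hv <;> by_contra hv' <;>
    · have hm : v ∈ (A \ B) ∪ (B \ A) := by simp [hv, hv']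
      simp [he] at hm
  set m := ((A \ B) ∪ (B \ A)).max' hS with hm
  refine ⟨m, ?_, ?_⟩
  · intro j hj
    by_contra hiff
    have hjmem : j ∈ (A \ B) ∪ (B \ A) := by
      simp only [mem_union, mem_sdiff]
      tauto
    exact absurd (Finset.le_max' _ j hjmem) (not_le.mpr hj)
  · have hmm := ((A \ B) ∪ (B \ A)).max'_mem hS
    rw [← hm] at hmm
    simp only [mem_union, mem_sdiff] at hmm
    tauto

lemma prec_iff (vr : γ → Finset (Fin n)) (c d : γ) :
    prec vr c d ↔ ∃ m : Fin n, m ∉ vr c ∧ m ∈ vr d ∧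
      ∀ j, m < j → (j ∈ vr c ↔ j ∈ vr d) := by
  constructor
  · rintro ⟨k, hsub, hns⟩
    have hne : vr c ≠ vr d := by
      rintro h; rw [h] at hns; exact hns (subset_refl _)
    obtain ⟨m, hagree, hcase⟩ := key hne
    rcases hcase with ⟨h1, h2⟩ | ⟨h1, h2⟩
    · exact ⟨m, h1, h2, hagree⟩
    · exfalso
      by_cases hk : (m : ℕ) < k
      · apply hns
        intro j hj
        simp only [mem_sdiff, mem_Xset, not_lt] at hj ⊢
        have hmj : m < j := Fin.lt_def.mpr (lt_of_lt_of_le hk hj.2)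
        exact ⟨(hagree j hmj).mpr hj.1, hj.2⟩
      · push_neg at hk
        have : m ∈ vr d \ Xset n k := hsub (by simp [mem_sdiff, mem_Xset, not_lt, h1, hk])
        simp only [mem_sdiff] at this
        exact h2 this.1
  · rintro ⟨m, hmc, hmd, hagree⟩
    refine ⟨(m : ℕ), ⟨?_, ?_⟩⟩
    · intro j hj
      simp only [mem_sdiff, mem_Xset, not_lt] at hj ⊢
      have hmj : m < j := lt_of_le_of_ne (Fin.le_def.mpr hj.2) (by rintro rfl; exact hmc hj.1)
      exact ⟨(hagree j hmj).mp hj.1, hj.2⟩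
    · intro hsub
      have hmm : m ∈ vr c \ Xset n (m : ℕ) := hsub (by simp [mem_sdiff, mem_Xset, hmd])
      simp only [mem_sdiff] at hmm
      exact hmc hmm.1

/-- `⪯` (i.e. `c = d ∨ c ≺ d`) is a total order on `I` when the
constraints of `I` have pairwise distinct variable sets and `x₁,…,xₙ`
enumerates `var(I)`. -/
theorem stmt4 (I : Finset γ) (vr : γ → Finset (Fin n))
    (hdist : ∀ c ∈ I, ∀ d ∈ I, vr c = vr d → c = d)
    (hcover : I.sup vr = Finset.univ) :
    (∀ c ∈ I, c = c ∨ prec vr c c) ∧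
    (∀ c ∈ I, ∀ d ∈ I, (c = d ∨ prec vr c d) → (d = c ∨ prec vr d c) → c = d) ∧
    (∀ c ∈ I, ∀ d ∈ I, ∀ e ∈ I,
      (c = d ∨ prec vr c d) → (d = e ∨ prec vr d e) → (c = e ∨ prec vr c e)) ∧
    (∀ c ∈ I, ∀ d ∈ I, (c = d ∨ prec vr c d) ∨ (d = c ∨ prec vr d c)) := by
  refine ⟨fun c _ => Or.inl rfl, ?_, ?_, ?_⟩
  · -- antisymmetry
    rintro c _ d _ (rfl | hcd) hdc
    · rfl
    rcases hdc with rfl | hdc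
    · rfl
    exfalso
    rw [prec_iff] at hcd hdc
    obtain ⟨m₁, hm1c, hm1d, hag1⟩ := hcd
    obtain ⟨m₂, hm2d, hm2c, hag2⟩ := hdc
    rcases lt_trichotomy m₁ m₂ with h | h | h
    · exact hm2d ((hag1 m₂ h).mp hm2c)
    · exact hm2d (h ▸ hm1d)
    · exact hm1c ((hag2 m₁ h).mp hm1d)
  · -- transitivity
    rintro c _ d _ e _ (rfl | hcd) hde
    · exact hde
    rcases hde with rfl | hde
    · exact Or.inr hcd
    right
    rw [prec_iff] at hcd hde ⊢
    obtain ⟨m₁, hm1c, hm1d, hag1⟩ := hcd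
    obtain ⟨m₂, hm2d, hm2e, hag2⟩ := hde
    rcases lt_trichotomy m₁ m₂ with h | h | h
    · refine ⟨m₂, fun hc => hm2d ((hag1 m₂ h).mp hc), hm2e, fun j hj => ?_⟩
      exact (hag1 j (h.trans hj)).trans (hag2 j hj)
    · exact absurd (h ▸ hm1d) hm2d
    · refine ⟨m₁, hm1c, (hag2 m₁ h).mp hm1d, fun j hj => ?_⟩
      exact (hag1 j hj).trans (hag2 j (h.trans hj))
  · -- totality
    intro c hc d hd
    by_cases heq : vr c = vr d
    · exact Or.inl (Or.inl (hdist c hc d hd heq))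
    obtain ⟨m, hagree, hcase⟩ := key heq
    rcases hcase with ⟨h1, h2⟩ | ⟨h1, h2⟩
    · exact Or.inl (Or.inr ((prec_iff vr c d).mpr ⟨m, h1, h2, hagree⟩))
    · exact Or.inr (Or.inr ((prec_iff vr d c).mpr
        ⟨m, h2, h1, fun j hj => (hagree j hj).symm⟩))
end

section
/- Let I be a finite set of constraints with pairwise distinct variable sets, x₁,…,xₙ an enumeration of the variables with Xₖ = {x₁,…,xₖ}, ≺ the total order defined by c ≺ d iff ∃k with var(c) \ Xₖ ⊊ var(d) \ Xₖ, and define ≺ₖ inductively: ≺₀ = ∅, and c ≺_{k+1} d iff c ≺ₖ d or there exists e with c ⪯ₖ e ≺ d and x_{k+1} ∈ var(d) ∩ var(e). Suppose that x₁,…,xₙ is a β-elimination order of the hypergraph of I. Then for all k and all c, d ∈ I: c ≺_{k+1} d implies c ≺ d and var(c) \ Xₖ ⊆ var(d) \ Xₖ. -/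
open Finset
open scoped Classical

variable {n : ℕ} {γ : Type*}

lemma Xmono {m j : ℕ} (h : m ≤ j) : Xset n m ⊆ Xset n j := by
  intro v hv
  simp only [Xset, Finset.mem_filter, Finset.mem_univ, true_and] at hv ⊢
  omega

lemma sdiff_level {A B : Finset (Fin n)} {m j : ℕ} (hmj : m ≤ j)
    (h : A \ Xset n m ⊆ B \ Xset n m) : A \ Xset n j ⊆ B \ Xset n j := by
  intro x hx
  obtain ⟨hxA, hxj⟩ := Finset.mem_sdiff.1 hx
  have := h (Finset.mem_sdiff.2 ⟨hxA, fun hm => hxj (Xmono hmj hm)⟩)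
  exact Finset.mem_sdiff.2 ⟨(Finset.mem_sdiff.1 this).1, hxj⟩

lemma prec_trans {vr : γ → Finset (Fin n)} {c d e : γ}
    (h1 : prec vr c d) (h2 : prec vr d e) : prec vr c e := by
  obtain ⟨m, hm⟩ := h1
  obtain ⟨j, hj⟩ := h2
  rcases le_total m j with hmj | hjm
  · exact ⟨j, _root_.ssubset_of_subset_of_ssubset (sdiff_level hmj hm.subset) hj⟩
  · exact ⟨m, _root_.ssubset_of_ssubset_of_subset hm (sdiff_level hjm hj.subset)⟩

/-- `c ≺_{k+1} d` implies `c ≺ d` and `var(c) \ Xₖ ⊆ var(d) \ Xₖ`. -/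
theorem stmt5 (I : Finset γ) (vr : γ → Finset (Fin n))
    (hdist : ∀ c ∈ I, ∀ d ∈ I, vr c = vr d → c = d)
    (hcover : I.sup vr = Finset.univ)
    (helim : ElimOrder I vr) :
    ∀ k : ℕ, ∀ c ∈ I, ∀ d ∈ I, preck I vr (k+1) c d →
      prec vr c d ∧ vr c \ Xset n k ⊆ vr d \ Xset n k := by
  intro k
  induction k with
  | zero =>
    intro c hc d hd h
    rw [preck] at h
    rcases h with h | ⟨e, he, hce, hed, hn, hxd, hxe⟩
    · rw [preck] at h; exact h.elim
    · obtain rfl : c = e := hce.resolve_right (fun h => by rw [preck] at h; exact h.elim)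
      refine ⟨hed, ?_⟩
      rcases helim 0 hn c hc d hd hxe hxd with h1 | h1
      · exact h1
      · exfalso
        obtain ⟨m, hm⟩ := hed
        exact hm.not_subset (sdiff_level (Nat.zero_le m) h1)
  | succ k IH =>
    intro c hc d hd h
    rw [preck] at h
    rcases h with h | ⟨e, he, hce, hed, hn, hxd, hxe⟩
    · obtain ⟨h1, h2⟩ := IH c hc d hd h
      exact ⟨h1, sdiff_level (Nat.le_succ k) h2⟩
    · have hed' : vr e \ Xset n (k+1) ⊆ vr d \ Xset n (k+1) := by
        rcases helim (k+1) hn e he d hd hxe hxd with h1 | h1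
        · exact h1
        · obtain ⟨m, hm⟩ := hed
          rcases le_total m (k+1) with hmk | hmk
          · exact sdiff_level hmk hm.subset
          · exact absurd (sdiff_level hmk h1) hm.not_subset
      rcases hce with rfl | hce
      · exact ⟨hed, hed'⟩
      · obtain ⟨h1, h2⟩ := IH c hc e he hce
        exact ⟨prec_trans h1 hed, (sdiff_level (Nat.le_succ k) h2).trans hed'⟩
end

section
/- With the orders ≺ and ≺ₖ on a finite constraint set I with pairwise distinct variable sets, whose variables x₁,…,xₙ form a β-elimination order of the hypergraph of I: for all c, d ∈ I, if c ≺ d but not c ≺ₖ d, then var(c) ∩ var(d) ∩ Xₖ = ∅. -/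
open Finset
open scoped Classical

variable {n : ℕ} {γ : Type*}

/-- if `c ≺ d` but not `c ≺ₖ d`, then `var(c) ∩ var(d) ∩ Xₖ = ∅`. -/
theorem stmt7 (I : Finset γ) (vr : γ → Finset (Fin n))
    (hdist : ∀ c ∈ I, ∀ d ∈ I, vr c = vr d → c = d)
    (hcover : I.sup vr = Finset.univ)
    (helim : ElimOrder I vr) :
    ∀ k : ℕ, ∀ c ∈ I, ∀ d ∈ I, prec vr c d → ¬ preck I vr k c d →
      vr c ∩ vr d ∩ Xset n k = ∅ := by
  intro k
  induction k with
  | zero =>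
    intro c hc d hd hprec hnot
    ext v; simp [Xset]
  | succ k ih =>
    intro c hc d hd hprec hnot
    have h1 : vr c ∩ vr d ∩ Xset n k = ∅ := ih c hc d hd hprec (fun h => hnot (Or.inl h))
    ext v
    simp only [Finset.mem_inter, Finset.notMem_empty, iff_false, Xset, Finset.mem_filter,
      Finset.mem_univ, true_and]
    rintro ⟨⟨hvc, hvd⟩, hvk⟩
    rcases lt_or_eq_of_le (Nat.lt_succ_iff.mp hvk) with h | h
    · exact Finset.eq_empty_iff_forall_notMem.mp h1 v
        (by simp [Xset, hvc, hvd, h])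
    · have hkn : k < n := h ▸ v.isLt
      have hv : v = ⟨k, hkn⟩ := Fin.ext h
      exact hnot (Or.inr ⟨c, hc, Or.inl rfl, hprec, hkn, hv ▸ hvd, hv ▸ hvc⟩)
end

section
/- With the orders ≺ and ≺ₖ as above, define Iₖ(c) := {d ∈ I : d ⪯ₖ c}. If x_{k+1} ∉ var(c) then I_{k+1}(c) = Iₖ(c). Otherwise, listing the constraints containing x_{k+1} as c₁ ≺ c₂ ≺ … ≺ cₘ, we have I_{k+1}(c₁) = Iₖ(c₁) and I_{k+1}(c_{i+1}) = Iₖ(c_{i+1}) ∪ I_{k+1}(cᵢ) for all i < m. -/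
open Finset
open scoped Classical

variable {n : ℕ} {γ : Type*}

/-- `Iₖ(c) = {d ∈ I : d ⪯ₖ c}`. -/
noncomputable def Ik (I : Finset γ) (vr : γ → Finset (Fin n)) (k : ℕ) (c : γ) : Finset γ :=
  I.filter (fun d => d = c ∨ preck I vr k d c)

lemma Xset_mono {j l : ℕ} (h : j ≤ l) : Xset n j ⊆ Xset n l := by
  intro x hx
  simp only [Xset, Finset.mem_filter, Finset.mem_univ, true_and] at *
  omega

lemma sdiff_sub_of_ssub {vr : γ → Finset (Fin n)} {c d : γ} {j l : ℕ} (hjl : j ≤ l)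
    (h : vr c \ Xset n j ⊂ vr d \ Xset n j) :
    vr c \ Xset n l ⊆ vr d \ Xset n l := by
  intro x hx
  rw [Finset.mem_sdiff] at hx ⊢
  have hxj : x ∈ vr c \ Xset n j :=
    Finset.mem_sdiff.2 ⟨hx.1, fun hj => hx.2 (Xset_mono hjl hj)⟩
  exact ⟨(Finset.mem_sdiff.1 (h.subset hxj)).1, hx.2⟩

lemma prec_irrefl {vr : γ → Finset (Fin n)} (c : γ) : ¬ prec vr c c := by
  rintro ⟨j, hj⟩; exact ssubset_irrefl _ hj

lemma prec_asymm {vr : γ → Finset (Fin n)} {c d : γ}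
    (h1 : prec vr c d) (h2 : prec vr d c) : False := by
  obtain ⟨j, hj⟩ := h1
  obtain ⟨l, hl⟩ := h2
  rcases le_total j l with h | h
  · exact hl.not_subset (sdiff_sub_of_ssub h hj)
  · exact hj.not_subset (sdiff_sub_of_ssub h hl)

/-- evolution of the sets `Iₖ(c)` during one elimination step. -/
theorem stmt9 (I : Finset γ) (vr : γ → Finset (Fin n))
    (hdist : ∀ c ∈ I, ∀ d ∈ I, vr c = vr d → c = d)
    (hcover : I.sup vr = Finset.univ)
    (helim : ElimOrder I vr)
    (k : ℕ) (hk : k < n) :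
    (∀ c ∈ I, (⟨k, hk⟩ : Fin n) ∉ vr c → Ik I vr (k+1) c = Ik I vr k c) ∧
    (∀ (m : ℕ) (cs : Fin m → γ),
      (∀ i, cs i ∈ I ∧ (⟨k, hk⟩ : Fin n) ∈ vr (cs i)) →
      (∀ c ∈ I, (⟨k, hk⟩ : Fin n) ∈ vr c → ∃ i, cs i = c) →
      (∀ i j : Fin m, i < j → prec vr (cs i) (cs j)) →
      (∀ h0 : 0 < m, Ik I vr (k+1) (cs ⟨0, h0⟩) = Ik I vr k (cs ⟨0, h0⟩)) ∧
      (∀ (i : Fin m) (hi : (i : ℕ) + 1 < m),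
        Ik I vr (k+1) (cs ⟨(i : ℕ) + 1, hi⟩) =
          Ik I vr k (cs ⟨(i : ℕ) + 1, hi⟩) ∪ Ik I vr (k+1) (cs i))) := by
  constructor
  · intro c hc hnc
    ext d
    simp only [Ik, Finset.mem_filter]
    refine and_congr_right fun hd => or_congr_right ⟨?_, Or.inl⟩
    rintro (h | ⟨e, he, hde, hec, h', hmc, hme⟩)
    · exact h
    · exact absurd hmc hnc
  · intro m cs hcs hsurj hord
    have key : ∀ (e : γ) (p : Fin m), e ∈ I → (⟨k, hk⟩ : Fin n) ∈ vr e →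
        prec vr e (cs p) → ∃ j : Fin m, cs j = e ∧ (j : ℕ) < (p : ℕ) := by
      intro e p he hme hep
      obtain ⟨j, rfl⟩ := hsurj e he hme
      refine ⟨j, rfl, ?_⟩
      rcases lt_trichotomy (j : ℕ) (p : ℕ) with h | h | h
      · exact h
      · have : j = p := Fin.ext h
        subst this
        exact (prec_irrefl _ hep).elim
      · exact (prec_asymm hep (hord p j (Fin.lt_def.mpr h))).elim
    constructor
    · intro h0
      ext d
      simp only [Ik, Finset.mem_filter]
      refine and_congr_right fun hd => or_congr_right ⟨?_, Or.inl⟩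
      rintro (h | ⟨e, he, hde, hec, h', hmc, hme⟩)
      · exact h
      · obtain ⟨j, rfl, hj⟩ := key e ⟨0, h0⟩ he hme hec
        exact absurd hj (Nat.not_lt_zero _)
    · intro i hi
      ext d
      simp only [Ik, Finset.mem_filter, Finset.mem_union]
      constructor
      · rintro ⟨hd, (rfl | h)⟩
        · exact Or.inl ⟨hd, Or.inl rfl⟩
        · rcases h with h | ⟨e, he, hde, hec, h', hmc, hme⟩
          · exact Or.inl ⟨hd, Or.inr h⟩
          · obtain ⟨j, rfl, hj⟩ := key e ⟨(i : ℕ) + 1, hi⟩ he hme hec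
            rcases Nat.lt_succ_iff_lt_or_eq.mp hj with hji | hji
            · exact Or.inr ⟨hd, Or.inr (Or.inr
                ⟨cs j, he, hde, hord j i (Fin.lt_def.mpr hji), hk, (hcs i).2, hme⟩)⟩
            · have : j = i := Fin.ext hji
              subst this
              rcases hde with rfl | hde
              · exact Or.inr ⟨hd, Or.inl rfl⟩
              · exact Or.inr ⟨hd, Or.inr (Or.inl hde)⟩
      · have hlt : i < (⟨(i : ℕ) + 1, hi⟩ : Fin m) := Fin.lt_def.mpr (Nat.lt_succ_self _)
        rintro (⟨hd, (rfl | h)⟩ | ⟨hd, h⟩)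
        · exact ⟨hd, Or.inl rfl⟩
        · exact ⟨hd, Or.inr (Or.inl h)⟩
        · refine ⟨hd, Or.inr ?_⟩
          rcases h with rfl | h
          · exact Or.inr ⟨cs i, (hcs i).1, Or.inl rfl, hord i _ hlt, hk,
              (hcs ⟨(i : ℕ) + 1, hi⟩).2, (hcs i).2⟩
          · rcases h with h | ⟨e, he, hde, hec, h', hmc, hme⟩
            · exact Or.inr ⟨cs i, (hcs i).1, Or.inr h, hord i _ hlt, hk,
                (hcs ⟨(i : ℕ) + 1, hi⟩).2, (hcs i).2⟩
            · obtain ⟨j, rfl, hj⟩ := key e i he hme hec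
              exact Or.inr ⟨cs j, he, hde, hord j _ (Fin.lt_def.mpr (by omega)), hk,
                (hcs ⟨(i : ℕ) + 1, hi⟩).2, hme⟩
end

section
/- In the one-step elimination of a nest point x from a constraint set I (Theorem on nest-point elimination): for every i ≤ p and every total assignment a of var(cᵢ) \ {x}, one has |D| · Π_{j=1}^{i} c'_j(a|_{var(c'_j)}) = Σ_{d∈D} Π_{j=1}^{i} c_j((a ⊕_x d)|_{var(c_j)}). -/
open Finset
open scoped Classical

variable {V D : Type*} [Fintype V] [DecidableEq V] [Fintype D] [DecidableEq D]

/-- in the one-step elimination of a nest point `x`, for every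
`i ≤ p` and every assignment `a` (of `var(cᵢ) \ {x}`; the values depend on no
other variables),
`|D| · Π_{j≤i} c'_j(a) = Σ_{d∈D} Π_{j≤i} c_j(a ⊕_x d)`. -/
theorem stmt12 {ι : Type*} [Fintype ι]
    (C C' : ι → Cst V D) (x : V) (p : ℕ) (e : Fin p → ι)
    (hinj : Function.Injective e)
    (hcov : ∀ i : ι, x ∈ (C i).vars ↔ ∃ j, e j = i)
    (hmono : ∀ j k : Fin p, j ≤ k → (C (e j)).vars ⊆ (C (e k)).vars)
    (hkeep : ∀ i : ι, x ∉ (C i).vars → C' i = C i)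
    (hvars' : ∀ j : Fin p, (C' (e j)).vars = (C (e j)).vars.erase x)
    (hval' : ∀ (j : Fin p) (a : V → D),
      (C' (e j)).val a =
        if (∑ d : D, ∏ k ∈ Finset.univ.filter (· < j),
              (C (e k)).val (Function.update a x d)) = 0 then 0
        else (∑ d : D, ∏ k ∈ Finset.univ.filter (· ≤ j),
                (C (e k)).val (Function.update a x d)) /
             (∑ d : D, ∏ k ∈ Finset.univ.filter (· < j),
                (C (e k)).val (Function.update a x d))) :
    ∀ (i : Fin p) (a : V → D),
      (Fintype.card D : NNRat) *
          ∏ j ∈ Finset.univ.filter (· ≤ i), (C' (e j)).val a =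
        ∑ d : D, ∏ j ∈ Finset.univ.filter (· ≤ i),
          (C (e j)).val (Function.update a x d) := by

  have filter_le : ∀ i : Fin p,
      (univ.filter (· ≤ i)) = insert i (univ.filter (· < i)) := by
    intro i; ext j
    simp only [mem_filter, mem_univ, true_and, mem_insert, Fin.le_def, Fin.lt_def,
      Fin.ext_iff]
    omega
  have hnotmem : ∀ i : Fin p, i ∉ univ.filter (· < i) := by
    intro i; simp
  suffices H : ∀ (n : ℕ) (i : Fin p), i.val = n → ∀ a : V → D,
      (Fintype.card D : NNRat) *
          ∏ j ∈ Finset.univ.filter (· ≤ i), (C' (e j)).val a =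
        ∑ d : D, ∏ j ∈ Finset.univ.filter (· ≤ i),
          (C (e j)).val (Function.update a x d) by
    intro i a; exact H i.val i rfl a
  intro n
  induction n using Nat.strong_induction_on with
  | _ n ih =>
    intro i hn a
    have hlt : (Fintype.card D : NNRat) *
        ∏ j ∈ univ.filter (· < i), (C' (e j)).val a
        = ∑ d : D, ∏ j ∈ univ.filter (· < i), (C (e j)).val (Function.update a x d) := by
      rcases Nat.eq_zero_or_pos i.val with h0 | hpos
      · have hemp : univ.filter (· < i) = (∅ : Finset (Fin p)) := by
          ext j; simp [Fin.lt_def, h0]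
        simp [hemp]
      · have hi' : i.val - 1 < p := lt_of_le_of_lt (Nat.sub_le _ _) i.isLt
        have hfilter : univ.filter (· < i) = univ.filter (· ≤ (⟨i.val - 1, hi'⟩ : Fin p)) := by
          ext j
          simp only [mem_filter, mem_univ, true_and, Fin.lt_def, Fin.le_def]
          omega
        rw [hfilter]
        exact ih (i.val - 1) (by omega) _ rfl a
    rw [filter_le i]
    simp only [Finset.prod_insert (hnotmem i)]
    rw [hval' i a]
    simp only [filter_le i, Finset.prod_insert (hnotmem i)]
    set A : NNRat := ∑ d : D, ∏ k ∈ univ.filter (· < i),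
        (C (e k)).val (Function.update a x d) with hA
    set B : NNRat := ∑ d : D, (C (e i)).val (Function.update a x d) *
        ∏ k ∈ univ.filter (· < i), (C (e k)).val (Function.update a x d) with hB
    split_ifs with h0
    · simp only [zero_mul, mul_zero]
      symm
      apply Finset.sum_eq_zero
      intro d _
      rw [hA] at h0
      have hz : ∏ k ∈ univ.filter (· < i), (C (e k)).val (Function.update a x d) = 0 :=
        (Finset.sum_eq_zero_iff.mp h0) d (mem_univ d)
      rw [hz, mul_zero]
    · calc (Fintype.card D : NNRat) *
            (B / A * ∏ j ∈ univ.filter (· < i), (C' (e j)).val a)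
          = ((Fintype.card D : NNRat) *
              ∏ j ∈ univ.filter (· < i), (C' (e j)).val a) * (B / A) := by ring
        _ = A * (B / A) := by rw [hlt]
        _ = B := by
            rw [mul_div_assoc']
            exact mul_div_cancel_left₀ B h0
end

section
/- Let G = (V,E) be a graph and define the bipartite graph G' with vertices x_v, y_v for v ∈ V and p_{e,u}, q_{e,u}, p_{e,v}, q_{e,v} for each edge e = uv ∈ E, with edges: x_v y_u for all u,v ∈ V, and for each e = uv the edges p_{e,u}q_{e,u}, p_{e,v}q_{e,v}, x_u p_{e,u}, y_v q_{e,u}, x_v p_{e,v}, y_u q_{e,v}. Then G' is chordal bipartite: every cycle of length at least 6 in G' has a chord. -/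
open Finset
open scoped Classical

variable {V : Type*} [Fintype V] [DecidableEq V]

/-- Oriented edges `(u,v)` of a graph, used to index the vertices
`p_{e,u}, q_{e,u}` (for `e = uv`) of the derived graph. -/
def OEdge (G : SimpleGraph V) : Type _ := {uv : V × V // G.Adj uv.1 uv.2}

/-- The derived graph `G'` of `G`: vertices `x_v`, `y_v` for `v ∈ V` and
`p_{e,u}, q_{e,u}` for each oriented edge `(u,v)` of `G`; edges `x_v y_u` for
all `u, v`, and for each edge `e = uv` the edges `p_{e,u} q_{e,u}`,
`x_u p_{e,u}`, `y_v q_{e,u}` (the oriented edge `(v,u)` supplies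
`p_{e,v} q_{e,v}`, `x_v p_{e,v}`, `y_u q_{e,v}`). -/
def derived (G : SimpleGraph V) :
    SimpleGraph (V ⊕ V ⊕ OEdge G ⊕ OEdge G) :=
  SimpleGraph.fromRel (fun a b =>
    match a, b with
    | Sum.inl _, Sum.inr (Sum.inl _) => True
    | Sum.inl u, Sum.inr (Sum.inr (Sum.inl d)) => d.1.1 = u
    | Sum.inr (Sum.inl v), Sum.inr (Sum.inr (Sum.inr d)) => d.1.2 = v
    | Sum.inr (Sum.inr (Sum.inl d)), Sum.inr (Sum.inr (Sum.inr d')) => d = d'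
    | _, _ => False)

/-- Every cycle of length at least `6` has a chord: an edge of the graph
between two vertices of the cycle that is not an edge of the cycle. -/
def ChordCond {α : Type*} (G : SimpleGraph α) : Prop :=
  ∀ (v : α) (c : G.Walk v v), c.IsCycle → 6 ≤ c.length →
    ∃ a b, G.Adj a b ∧ a ∈ c.support ∧ b ∈ c.support ∧ s(a, b) ∉ c.edges

section CycleAux

variable {α : Type*} {G : SimpleGraph α}

lemma walk_support_getElem {u w : α} (p : G.Walk u w) (n : ℕ) (h : n < p.support.length) :
    p.support[n] = p.getVert n := by
  induction p generalizing n with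
  | nil =>
    simp only [SimpleGraph.Walk.support_nil, List.length_singleton] at h
    interval_cases n
    simp
  | cons h' p ih =>
    rcases n with _ | n
    · simp
    · have hh : n < p.support.length := by
        simp only [SimpleGraph.Walk.support_cons, List.length_cons] at h; omega
      simpa using ih n hh

lemma cycle_getVert_inj {v : α} {c : G.Walk v v} (hc : c.IsCycle) {i j : ℕ}
    (hi1 : 1 ≤ i) (hi2 : i ≤ c.length) (hj1 : 1 ≤ j) (hj2 : j ≤ c.length)
    (hij : c.getVert i = c.getVert j) : i = j := by
  have hnd : c.support.tail.Nodup := hc.support_nodup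
  have hlt : c.support.tail.length = c.length := by
    simp [List.length_tail, SimpleGraph.Walk.length_support]
  have key : ∀ k : ℕ, 1 ≤ k → k ≤ c.length → ∀ h : k - 1 < c.support.tail.length,
      c.support.tail[k - 1] = c.getVert k := by
    intro k h1 h2 h
    rw [List.getElem_tail, walk_support_getElem]
    congr 1
    omega
  have e1 : i - 1 < c.support.tail.length := by omega
  have e2 : j - 1 < c.support.tail.length := by omega
  have h := hnd.getElem_inj_iff (hi := e1) (hj := e2)
  rw [key i hi1 hi2 e1, key j hj1 hj2 e2] at h
  have := h.mp hij
  omega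

lemma edge_getVert {v : α} {c : G.Walk v v} {a b : α} (h : s(a, b) ∈ c.edges) :
    ∃ i, i < c.length ∧ ((c.getVert i = a ∧ c.getVert (i + 1) = b) ∨
      (c.getVert i = b ∧ c.getVert (i + 1) = a)) := by
  have h' : c.toSubgraph.Adj a b := by
    rw [← SimpleGraph.Subgraph.mem_edgeSet, SimpleGraph.Walk.mem_edges_toSubgraph]
    exact h
  rw [SimpleGraph.Walk.toSubgraph_adj_iff] at h'
  obtain ⟨i, h1, h2⟩ := h'
  rw [Sym2.eq_iff] at h1
  exact ⟨i, h2, h1⟩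

lemma getVert_edge {v : α} {c : G.Walk v v} {i : ℕ} (h : i < c.length) :
    s(c.getVert i, c.getVert (i + 1)) ∈ c.edges := by
  rw [← SimpleGraph.Walk.mem_edges_toSubgraph, SimpleGraph.Subgraph.mem_edgeSet]
  exact SimpleGraph.Walk.toSubgraph_adj_getVert _ h

lemma cycle_two {v : α} {c : G.Walk v v} (hc : c.IsCycle) {a b₁ b₂ b₃ : α}
    (h₁ : s(a, b₁) ∈ c.edges) (h₂ : s(a, b₂) ∈ c.edges) (h₃ : s(a, b₃) ∈ c.edges) :
    b₁ = b₂ ∨ b₁ = b₃ ∨ b₂ = b₃ := by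
  have h3 := hc.three_le_length
  have main : ∀ b, s(a, b) ∈ c.edges → ∃ t, 1 ≤ t ∧ t ≤ c.length ∧ c.getVert t = a ∧
      (b = (if t = c.length then c.getVert 1 else c.getVert (t + 1)) ∨ b = c.getVert (t - 1)) := by
    intro b hb
    obtain ⟨i, hi, hor⟩ := edge_getVert hb
    rcases hor with ⟨ha, hb'⟩ | ⟨hb', ha⟩
    · rcases Nat.eq_zero_or_pos i with h0 | h0
      · refine ⟨c.length, by omega, le_refl _, ?_, ?_⟩
        · rw [SimpleGraph.Walk.getVert_length, ← SimpleGraph.Walk.getVert_zero c, ← h0, ha]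
        · left; rw [if_pos rfl, ← hb', h0]
      · exact ⟨i, h0, by omega, ha, Or.inl (by rw [if_neg (by omega), hb'])⟩
    · exact ⟨i + 1, by omega, by omega, ha, Or.inr (by simp [hb'])⟩
  obtain ⟨t₁, ht₁1, ht₁2, ht₁a, hb₁⟩ := main b₁ h₁
  obtain ⟨t₂, ht₂1, ht₂2, ht₂a, hb₂⟩ := main b₂ h₂
  obtain ⟨t₃, ht₃1, ht₃2, ht₃a, hb₃⟩ := main b₃ h₃
  have e12 : t₁ = t₂ := cycle_getVert_inj hc ht₁1 ht₁2 ht₂1 ht₂2 (ht₁a.trans ht₂a.symm)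
  have e13 : t₁ = t₃ := cycle_getVert_inj hc ht₁1 ht₁2 ht₃1 ht₃2 (ht₁a.trans ht₃a.symm)
  rw [← e12] at hb₂
  rw [← e13] at hb₃
  rcases hb₁ with h1 | h1 <;> rcases hb₂ with h2 | h2 <;> rcases hb₃ with h3' | h3'
  · exact Or.inl (h1.trans h2.symm)
  · exact Or.inl (h1.trans h2.symm)
  · exact Or.inr (Or.inl (h1.trans h3'.symm))
  · exact Or.inr (Or.inr (h2.trans h3'.symm))
  · exact Or.inr (Or.inr (h2.trans h3'.symm))
  · exact Or.inr (Or.inl (h1.trans h3'.symm))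
  · exact Or.inl (h1.trans h2.symm)
  · exact Or.inl (h1.trans h2.symm)

lemma exists_two_start {v : α} {c : G.Walk v v} (hc : c.IsCycle) :
    ∃ b₁ b₂, b₁ ≠ b₂ ∧ s(v, b₁) ∈ c.edges ∧ s(v, b₂) ∈ c.edges := by
  have h3 := hc.three_le_length
  refine ⟨c.getVert 1, c.getVert (c.length - 1), ?_, ?_, ?_⟩
  · intro h
    have := cycle_getVert_inj hc (i := 1) (j := c.length - 1) (by omega) (by omega)
      (by omega) (by omega) h
    omega
  · have h' := getVert_edge (c := c) (i := 0) (by omega)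
    rwa [SimpleGraph.Walk.getVert_zero, zero_add] at h'
  · have h' := getVert_edge (c := c) (i := c.length - 1) (by omega)
    rw [show c.length - 1 + 1 = c.length by omega, SimpleGraph.Walk.getVert_length] at h'
    rwa [Sym2.eq_swap] at h'

lemma exists_two {v : α} {c : G.Walk v v} (hc : c.IsCycle) {a : α} (ha : a ∈ c.support) :
    ∃ b₁ b₂, b₁ ≠ b₂ ∧ s(a, b₁) ∈ c.edges ∧ s(a, b₂) ∈ c.edges := by
  have h3 := hc.three_le_length
  rw [SimpleGraph.Walk.mem_support_iff_exists_getVert] at ha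
  obtain ⟨n, hn, hnl⟩ := ha
  rcases Nat.eq_zero_or_pos n with h0 | h0
  · have hav : a = v := by rw [← hn, h0, SimpleGraph.Walk.getVert_zero]
    subst hav
    exact exists_two_start hc
  rcases eq_or_lt_of_le hnl with heq | hlt
  · have hav : a = v := by rw [← hn, heq, SimpleGraph.Walk.getVert_length]
    subst hav
    exact exists_two_start hc
  -- 1 ≤ n < length
  refine ⟨c.getVert (n - 1), c.getVert (n + 1), ?_, ?_, ?_⟩
  · intro h
    rcases Nat.lt_or_ge n 2 with h2 | h2
    · have hn1 : n = 1 := by omega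
      subst hn1
      have h' : c.getVert c.length = c.getVert (1 + 1) := by
        rw [SimpleGraph.Walk.getVert_length]
        simpa using h
      have := cycle_getVert_inj hc (i := c.length) (j := 1 + 1) (by omega) (le_refl _)
        (by omega) (by omega) h'
      omega
    · have := cycle_getVert_inj hc (i := n - 1) (j := n + 1) (by omega) (by omega)
        (by omega) (by omega) h
      omega
  · have h' := getVert_edge (c := c) (i := n - 1) (by omega)
    rw [show n - 1 + 1 = n by omega, hn] at h'
    rwa [Sym2.eq_swap] at h'
  · have h' := getVert_edge (c := c) (i := n) hlt
    rwa [hn] at h'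

lemma support_bound {v : α} {c : G.Walk v v} (hc : c.IsCycle)
    (h6 : 6 ≤ c.length) (l : List α) (hl : l.length ≤ 4)
    (hsub : ∀ z ∈ c.support, z ∈ l) : False := by
  classical
  have ht : c.support.tail.Nodup := hc.support_nodup
  have hlen : c.support.tail.length = c.length := by
    simp [List.length_tail, SimpleGraph.Walk.length_support]
  have h1 : c.support.tail.toFinset.card = c.support.tail.length :=
    List.toFinset_card_of_nodup ht
  have h2 : c.support.tail.toFinset ⊆ l.toFinset := by
    intro x hx
    rw [List.mem_toFinset] at hx ⊢
    exact hsub x (List.mem_of_mem_tail hx)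
  have h3 := Finset.card_le_card h2
  have h4 := l.toFinset_card_le
  omega

end CycleAux

section DerivedAux

variable {G : SimpleGraph V}

lemma adjXY (u w : V) : (derived G).Adj (Sum.inl u) (Sum.inr (Sum.inl w)) := by
  rw [derived, SimpleGraph.fromRel_adj]
  exact ⟨by simp, Or.inl trivial⟩

lemma adjP {z : V ⊕ V ⊕ OEdge G ⊕ OEdge G} {d : OEdge G} :
    (derived G).Adj z (Sum.inr (Sum.inr (Sum.inl d))) ↔
      z = Sum.inl d.1.1 ∨ z = Sum.inr (Sum.inr (Sum.inr d)) := by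
  rcases z with u | w | d' | d' <;>
    simp [derived, SimpleGraph.fromRel_adj, eq_comm]

lemma adjQ {z : V ⊕ V ⊕ OEdge G ⊕ OEdge G} {d : OEdge G} :
    (derived G).Adj z (Sum.inr (Sum.inr (Sum.inr d))) ↔
      z = Sum.inr (Sum.inl d.1.2) ∨ z = Sum.inr (Sum.inr (Sum.inl d)) := by
  rcases z with u | w | d' | d' <;>
    simp [derived, SimpleGraph.fromRel_adj, eq_comm]

lemma adjY {z : V ⊕ V ⊕ OEdge G ⊕ OEdge G} {w : V} :
    (derived G).Adj z (Sum.inr (Sum.inl w)) ↔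
      (∃ u, z = Sum.inl u) ∨ (∃ d : OEdge G, d.1.2 = w ∧ z = Sum.inr (Sum.inr (Sum.inr d))) := by
  rcases z with u | w' | d' | d' <;>
    simp [derived, SimpleGraph.fromRel_adj, eq_comm]

end DerivedAux

/-- the derived graph `G'` is chordal bipartite. -/
theorem stmt15 (G : SimpleGraph V) :
    (derived G).Colorable 2 ∧ ChordCond (derived G) := by
  constructor
  · -- 2-colorability
    refine ⟨SimpleGraph.Coloring.mk
      (Sum.elim (fun _ => (0 : Fin 2)) (Sum.elim (fun _ => 1) (Sum.elim (fun _ => 1) (fun _ => 0))))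
      ?_⟩
    intro a b hab
    rw [derived, SimpleGraph.fromRel_adj] at hab
    obtain ⟨hne, h⟩ := hab
    rcases a with u | w | d | d <;> rcases b with u' | w' | d' | d' <;>
      simp_all <;> decide
  · -- chord condition
    intro v c hc h6
    by_contra hcon
    push_neg at hcon
    -- forced edges at p and q vertices
    have hPf : ∀ d : OEdge G, (Sum.inr (Sum.inr (Sum.inl d)) : V ⊕ V ⊕ OEdge G ⊕ OEdge G)
        ∈ c.support →
        s(Sum.inr (Sum.inr (Sum.inl d)), (Sum.inl d.1.1 : V ⊕ V ⊕ OEdge G ⊕ OEdge G)) ∈ c.edges ∧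
        s(Sum.inr (Sum.inr (Sum.inl d)),
          (Sum.inr (Sum.inr (Sum.inr d)) : V ⊕ V ⊕ OEdge G ⊕ OEdge G)) ∈ c.edges := by
      intro d hd
      obtain ⟨b₁, b₂, hne, h1, h2⟩ := exists_two hc hd
      have a1 : (derived G).Adj (Sum.inr (Sum.inr (Sum.inl d))) b₁ := c.adj_of_mem_edges h1
      have a2 : (derived G).Adj (Sum.inr (Sum.inr (Sum.inl d))) b₂ := c.adj_of_mem_edges h2
      rw [SimpleGraph.adj_comm, adjP] at a1 a2
      rcases a1 with e1 | e1 <;> rcases a2 with e2 | e2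
      · exact absurd (e1.trans e2.symm) hne
      · exact ⟨e1 ▸ h1, e2 ▸ h2⟩
      · exact ⟨e2 ▸ h2, e1 ▸ h1⟩
      · exact absurd (e1.trans e2.symm) hne
    have hQf : ∀ d : OEdge G, (Sum.inr (Sum.inr (Sum.inr d)) : V ⊕ V ⊕ OEdge G ⊕ OEdge G)
        ∈ c.support →
        s(Sum.inr (Sum.inr (Sum.inr d)),
          (Sum.inr (Sum.inl d.1.2) : V ⊕ V ⊕ OEdge G ⊕ OEdge G)) ∈ c.edges ∧
        s(Sum.inr (Sum.inr (Sum.inr d)),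
          (Sum.inr (Sum.inr (Sum.inl d)) : V ⊕ V ⊕ OEdge G ⊕ OEdge G)) ∈ c.edges := by
      intro d hd
      obtain ⟨b₁, b₂, hne, h1, h2⟩ := exists_two hc hd
      have a1 : (derived G).Adj (Sum.inr (Sum.inr (Sum.inr d))) b₁ := c.adj_of_mem_edges h1
      have a2 : (derived G).Adj (Sum.inr (Sum.inr (Sum.inr d))) b₂ := c.adj_of_mem_edges h2
      rw [SimpleGraph.adj_comm, adjQ] at a1 a2
      rcases a1 with e1 | e1 <;> rcases a2 with e2 | e2
      · exact absurd (e1.trans e2.symm) hne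
      · exact ⟨e1 ▸ h1, e2 ▸ h2⟩
      · exact ⟨e2 ▸ h2, e1 ▸ h1⟩
      · exact absurd (e1.trans e2.symm) hne
    -- the no-chord hypothesis on X–Y pairs
    have hXY : ∀ u w : V, (Sum.inl u : V ⊕ V ⊕ OEdge G ⊕ OEdge G) ∈ c.support →
        (Sum.inr (Sum.inl w) : V ⊕ V ⊕ OEdge G ⊕ OEdge G) ∈ c.support →
        s((Sum.inl u : V ⊕ V ⊕ OEdge G ⊕ OEdge G), Sum.inr (Sum.inl w)) ∈ c.edges := by
      intro u w hu hw
      exact hcon _ _ (adjXY u w) hu hw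
    -- chains: Q in support gives P, X, Y in support
    have hQchain : ∀ d : OEdge G,
        (Sum.inr (Sum.inr (Sum.inr d)) : V ⊕ V ⊕ OEdge G ⊕ OEdge G) ∈ c.support →
        (Sum.inr (Sum.inl d.1.2) : V ⊕ V ⊕ OEdge G ⊕ OEdge G) ∈ c.support ∧
        (Sum.inr (Sum.inr (Sum.inl d)) : V ⊕ V ⊕ OEdge G ⊕ OEdge G) ∈ c.support ∧
        (Sum.inl d.1.1 : V ⊕ V ⊕ OEdge G ⊕ OEdge G) ∈ c.support := by
      intro d hd
      obtain ⟨e1, e2⟩ := hQf d hd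
      have hY : (Sum.inr (Sum.inl d.1.2) : V ⊕ V ⊕ OEdge G ⊕ OEdge G) ∈ c.support :=
        c.snd_mem_support_of_mem_edges e1
      have hP : (Sum.inr (Sum.inr (Sum.inl d)) : V ⊕ V ⊕ OEdge G ⊕ OEdge G) ∈ c.support :=
        c.snd_mem_support_of_mem_edges e2
      obtain ⟨e3, _⟩ := hPf d hP
      exact ⟨hY, hP, c.snd_mem_support_of_mem_edges e3⟩
    have hPchain : ∀ d : OEdge G,
        (Sum.inr (Sum.inr (Sum.inl d)) : V ⊕ V ⊕ OEdge G ⊕ OEdge G) ∈ c.support →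
        (Sum.inr (Sum.inr (Sum.inr d)) : V ⊕ V ⊕ OEdge G ⊕ OEdge G) ∈ c.support := by
      intro d hd
      exact c.snd_mem_support_of_mem_edges (hPf d hd).2
    -- existence of an X vertex and a Y vertex in the support
    have hXex : ∃ u : V, (Sum.inl u : V ⊕ V ⊕ OEdge G ⊕ OEdge G) ∈ c.support := by
      obtain ⟨b₁, b₂, hne, h1, h2⟩ := exists_two hc c.start_mem_support
      have hb : b₁ ∈ c.support := c.snd_mem_support_of_mem_edges h1
      rcases b₁ with u | w | d | d
      · exact ⟨u, hb⟩
      · obtain ⟨b₁', b₂', hne', h1', h2'⟩ := exists_two hc hb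
        have a1 : (derived G).Adj (Sum.inr (Sum.inl w)) b₁' := c.adj_of_mem_edges h1'
        rw [SimpleGraph.adj_comm, adjY] at a1
        rcases a1 with ⟨u, hu⟩ | ⟨d, _, hd⟩
        · exact ⟨u, hu ▸ c.snd_mem_support_of_mem_edges h1'⟩
        · have hQ : (Sum.inr (Sum.inr (Sum.inr d)) : V ⊕ V ⊕ OEdge G ⊕ OEdge G) ∈ c.support :=
            hd ▸ c.snd_mem_support_of_mem_edges h1'
          exact ⟨d.1.1, (hQchain d hQ).2.2⟩
      · exact ⟨d.1.1, (hQchain d (hPchain d hb)).2.2⟩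
      · exact ⟨d.1.1, (hQchain d hb).2.2⟩
    have hYex : ∃ w : V, (Sum.inr (Sum.inl w) : V ⊕ V ⊕ OEdge G ⊕ OEdge G) ∈ c.support := by
      obtain ⟨u, hu⟩ := hXex
      obtain ⟨b₁, b₂, hne, h1, h2⟩ := exists_two hc hu
      have a1 : (derived G).Adj (Sum.inl u) b₁ := c.adj_of_mem_edges h1
      rcases hb : b₁ with u' | w | d | d
      · rw [hb] at a1; simp [derived, SimpleGraph.fromRel_adj] at a1
      · exact ⟨w, hb ▸ c.snd_mem_support_of_mem_edges h1⟩
      · have hP : (Sum.inr (Sum.inr (Sum.inl d)) : V ⊕ V ⊕ OEdge G ⊕ OEdge G) ∈ c.support :=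
          hb ▸ c.snd_mem_support_of_mem_edges h1
        exact ⟨d.1.2, (hQchain d (hPchain d hP)).1⟩
      · rw [hb] at a1; simp [derived, SimpleGraph.fromRel_adj] at a1
    obtain ⟨u0, hu0⟩ := hXex
    obtain ⟨w0, hw0⟩ := hYex
    rcases Classical.em (∃ d : OEdge G,
        (Sum.inr (Sum.inr (Sum.inr d)) : V ⊕ V ⊕ OEdge G ⊕ OEdge G) ∈ c.support) with hQex | hQex
    · -- Case A: some q vertex is on the cycle
      obtain ⟨d, hQd⟩ := hQex
      obtain ⟨hYd, hPd, hXd⟩ := hQchain d hQd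
      obtain ⟨ePX, ePQ⟩ := hPf d hPd
      obtain ⟨eQY, eQP⟩ := hQf d hQd
      -- unique X vertex
      have hXuniq : ∀ u : V, (Sum.inl u : V ⊕ V ⊕ OEdge G ⊕ OEdge G) ∈ c.support →
          u = d.1.1 := by
        intro u hu
        have k1 : s((Sum.inr (Sum.inl d.1.2) : V ⊕ V ⊕ OEdge G ⊕ OEdge G),
            Sum.inr (Sum.inr (Sum.inr d))) ∈ c.edges := Sym2.eq_swap ▸ eQY
        have k2 : s((Sum.inr (Sum.inl d.1.2) : V ⊕ V ⊕ OEdge G ⊕ OEdge G),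
            Sum.inl u) ∈ c.edges := Sym2.eq_swap ▸ hXY u d.1.2 hu hYd
        have k3 : s((Sum.inr (Sum.inl d.1.2) : V ⊕ V ⊕ OEdge G ⊕ OEdge G),
            Sum.inl d.1.1) ∈ c.edges := Sym2.eq_swap ▸ hXY d.1.1 d.1.2 hXd hYd
        rcases cycle_two hc k1 k2 k3 with h | h | h
        · simp at h
        · simp at h
        · exact Sum.inl.inj h
      -- unique Y vertex
      have hYuniq : ∀ w : V, (Sum.inr (Sum.inl w) : V ⊕ V ⊕ OEdge G ⊕ OEdge G) ∈ c.support →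
          w = d.1.2 := by
        intro w hw
        have k1 : s((Sum.inl d.1.1 : V ⊕ V ⊕ OEdge G ⊕ OEdge G),
            Sum.inr (Sum.inr (Sum.inl d))) ∈ c.edges := Sym2.eq_swap ▸ ePX
        have k2 : s((Sum.inl d.1.1 : V ⊕ V ⊕ OEdge G ⊕ OEdge G),
            Sum.inr (Sum.inl w)) ∈ c.edges := hXY d.1.1 w hXd hw
        have k3 : s((Sum.inl d.1.1 : V ⊕ V ⊕ OEdge G ⊕ OEdge G),
            Sum.inr (Sum.inl d.1.2)) ∈ c.edges := hXY d.1.1 d.1.2 hXd hYd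
        rcases cycle_two hc k1 k2 k3 with h | h | h
        · simp at h
        · simp at h
        · simpa using h
      -- unique P vertex
      have hPuniq : ∀ d' : OEdge G,
          (Sum.inr (Sum.inr (Sum.inl d')) : V ⊕ V ⊕ OEdge G ⊕ OEdge G) ∈ c.support →
          d' = d := by
        intro d' hd'
        obtain ⟨eP'X, _⟩ := hPf d' hd'
        have hXd' : (Sum.inl d'.1.1 : V ⊕ V ⊕ OEdge G ⊕ OEdge G) ∈ c.support :=
          c.snd_mem_support_of_mem_edges eP'X
        have h11 : d'.1.1 = d.1.1 := hXuniq _ hXd'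
        have k1 : s((Sum.inl d.1.1 : V ⊕ V ⊕ OEdge G ⊕ OEdge G),
            Sum.inr (Sum.inr (Sum.inl d'))) ∈ c.edges := by
          rw [← h11]; exact Sym2.eq_swap ▸ eP'X
        have k2 : s((Sum.inl d.1.1 : V ⊕ V ⊕ OEdge G ⊕ OEdge G),
            Sum.inr (Sum.inr (Sum.inl d))) ∈ c.edges := Sym2.eq_swap ▸ ePX
        have k3 : s((Sum.inl d.1.1 : V ⊕ V ⊕ OEdge G ⊕ OEdge G),
            Sum.inr (Sum.inl d.1.2)) ∈ c.edges := hXY d.1.1 d.1.2 hXd hYd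
        rcases cycle_two hc k1 k2 k3 with h | h | h
        · simpa using h
        · simp at h
        · simp at h
      -- unique Q vertex
      have hQuniq : ∀ d' : OEdge G,
          (Sum.inr (Sum.inr (Sum.inr d')) : V ⊕ V ⊕ OEdge G ⊕ OEdge G) ∈ c.support →
          d' = d := by
        intro d' hd'
        obtain ⟨eQ'Y, _⟩ := hQf d' hd'
        have hYd' : (Sum.inr (Sum.inl d'.1.2) : V ⊕ V ⊕ OEdge G ⊕ OEdge G) ∈ c.support :=
          c.snd_mem_support_of_mem_edges eQ'Y
        have h12 : d'.1.2 = d.1.2 := hYuniq _ hYd'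
        have k1 : s((Sum.inr (Sum.inl d.1.2) : V ⊕ V ⊕ OEdge G ⊕ OEdge G),
            Sum.inr (Sum.inr (Sum.inr d'))) ∈ c.edges := by
          rw [← h12]; exact Sym2.eq_swap ▸ eQ'Y
        have k2 : s((Sum.inr (Sum.inl d.1.2) : V ⊕ V ⊕ OEdge G ⊕ OEdge G),
            Sum.inr (Sum.inr (Sum.inr d))) ∈ c.edges := Sym2.eq_swap ▸ eQY
        have k3 : s((Sum.inr (Sum.inl d.1.2) : V ⊕ V ⊕ OEdge G ⊕ OEdge G),
            Sum.inl d.1.1) ∈ c.edges := Sym2.eq_swap ▸ hXY d.1.1 d.1.2 hXd hYd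
        rcases cycle_two hc k1 k2 k3 with h | h | h
        · simpa using h
        · simp at h
        · simp at h
      refine support_bound hc h6
        [Sum.inl d.1.1, Sum.inr (Sum.inl d.1.2), Sum.inr (Sum.inr (Sum.inl d)),
          Sum.inr (Sum.inr (Sum.inr d))] (by simp) ?_
      intro z hz
      rcases z with u | w | d' | d'
      · simp [hXuniq u hz]
      · simp [hYuniq w hz]
      · simp [hPuniq d' hz]
      · simp [hQuniq d' hz]
    · -- Case B: no q vertex, hence no p vertex, on the cycle
      push_neg at hQex
      have hPex : ∀ d : OEdge G,
          (Sum.inr (Sum.inr (Sum.inl d)) : V ⊕ V ⊕ OEdge G ⊕ OEdge G) ∉ c.support := by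
        intro d hd
        exact hQex d (hPchain d hd)
      -- at most two X vertices
      have hX2 : ∃ u₁ u₂ : V, ∀ u : V,
          (Sum.inl u : V ⊕ V ⊕ OEdge G ⊕ OEdge G) ∈ c.support → u = u₁ ∨ u = u₂ := by
        rcases Classical.em (∀ u : V,
            (Sum.inl u : V ⊕ V ⊕ OEdge G ⊕ OEdge G) ∈ c.support → u = u0) with hone | hone
        · exact ⟨u0, u0, fun u hu => Or.inl (hone u hu)⟩
        · push_neg at hone
          obtain ⟨u1, hu1, hne1⟩ := hone
          refine ⟨u0, u1, fun u hu => ?_⟩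
          by_contra hcc
          push_neg at hcc
          have k1 : s((Sum.inr (Sum.inl w0) : V ⊕ V ⊕ OEdge G ⊕ OEdge G),
              Sum.inl u) ∈ c.edges := Sym2.eq_swap ▸ hXY u w0 hu hw0
          have k2 : s((Sum.inr (Sum.inl w0) : V ⊕ V ⊕ OEdge G ⊕ OEdge G),
              Sum.inl u0) ∈ c.edges := Sym2.eq_swap ▸ hXY u0 w0 hu0 hw0
          have k3 : s((Sum.inr (Sum.inl w0) : V ⊕ V ⊕ OEdge G ⊕ OEdge G),
              Sum.inl u1) ∈ c.edges := Sym2.eq_swap ▸ hXY u1 w0 hu1 hw0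
          rcases cycle_two hc k1 k2 k3 with h | h | h
          · exact hcc.1 (Sum.inl.inj h)
          · exact hcc.2 (Sum.inl.inj h)
          · exact hne1 (Sum.inl.inj h).symm
      have hY2 : ∃ w₁ w₂ : V, ∀ w : V,
          (Sum.inr (Sum.inl w) : V ⊕ V ⊕ OEdge G ⊕ OEdge G) ∈ c.support → w = w₁ ∨ w = w₂ := by
        rcases Classical.em (∀ w : V,
            (Sum.inr (Sum.inl w) : V ⊕ V ⊕ OEdge G ⊕ OEdge G) ∈ c.support → w = w0) with hone | hone
        · exact ⟨w0, w0, fun w hw => Or.inl (hone w hw)⟩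
        · push_neg at hone
          obtain ⟨w1, hw1, hne1⟩ := hone
          refine ⟨w0, w1, fun w hw => ?_⟩
          by_contra hcc
          push_neg at hcc
          have k1 : s((Sum.inl u0 : V ⊕ V ⊕ OEdge G ⊕ OEdge G),
              Sum.inr (Sum.inl w)) ∈ c.edges := hXY u0 w hu0 hw
          have k2 : s((Sum.inl u0 : V ⊕ V ⊕ OEdge G ⊕ OEdge G),
              Sum.inr (Sum.inl w0)) ∈ c.edges := hXY u0 w0 hu0 hw0
          have k3 : s((Sum.inl u0 : V ⊕ V ⊕ OEdge G ⊕ OEdge G),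
              Sum.inr (Sum.inl w1)) ∈ c.edges := hXY u0 w1 hu0 hw1
          rcases cycle_two hc k1 k2 k3 with h | h | h
          · exact hcc.1 (by simpa using h)
          · exact hcc.2 (by simpa using h)
          · exact hne1 (by simpa using h.symm)
      obtain ⟨u1, u2, hXu⟩ := hX2
      obtain ⟨w1, w2, hYw⟩ := hY2
      refine support_bound hc h6
        [Sum.inl u1, Sum.inl u2, Sum.inr (Sum.inl w1), Sum.inr (Sum.inl w2)] (by simp) ?_
      intro z hz
      rcases z with u | w | d' | d'
      · rcases hXu u hz with h | h <;> simp [h]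
      · rcases hYw w hz with h | h <;> simp [h]
      · exact absurd hz (hPex d')
      · exact absurd hz (hQex d')
end
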